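/- Let F(x,y,z) = y²(z−6)(x+6) + y(x+z)(xz+3z−3x+36) + 3xz(4x−4z−xz) − 9(x+z)². Then for every scalar t with t, t+1, t+2 all nonzero, the point γ(t) = (6/t, 6/(t+1), 6/(t+2)) satisfies F(γ(t)) = 0, and moreover γ(t) satisfies the system (6z−12)(y−x)−(2y−6)(z−x) = 0 and 2xz − y(x+z) = 0. Conversely, every solution (x,y,z) of this system with x ≠ z and x+z ≠ 0 is of the form γ(t) for some t. -/
import Mathlib


/-- The elimination polynomial for 8-dimensional graded thread `W⁺`-modules of
type `(1,1,…,1)`. -/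
def Fpoly {K : Type*} [Field K] (x y z : K) : K :=
  y ^ 2 * (z - 6) * (x + 6) + y * (x + z) * (x * z + 3 * z - 3 * x + 36) +
    3 * x * z * (4 * x - 4 * z - x * z) - 9 * (x + z) ^ 2

/-- the singular curve `γ(t) = (6/t, 6/(t+1), 6/(t+2))` lies on
`{F = 0}` and satisfies the stated system; conversely every solution of the
system with `x ≠ z`, `x + z ≠ 0` lies on `γ`. -/
theorem stmt_12 {K : Type*} [Field K] [CharZero K] :
    (∀ t : K, t ≠ 0 → t + 1 ≠ 0 → t + 2 ≠ 0 →
      Fpoly (6 / t) (6 / (t + 1)) (6 / (t + 2)) = 0 ∧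
      (6 * (6 / (t + 2)) - 12) * (6 / (t + 1) - 6 / t) -
        (2 * (6 / (t + 1)) - 6) * (6 / (t + 2) - 6 / t) = 0 ∧
      2 * (6 / t) * (6 / (t + 2)) - (6 / (t + 1)) * (6 / t + 6 / (t + 2)) = 0) ∧
    (∀ x y z : K, x ≠ z → x + z ≠ 0 →
      (6 * z - 12) * (y - x) - (2 * y - 6) * (z - x) = 0 →
      2 * x * z - y * (x + z) = 0 →
      ∃ t : K, t ≠ 0 ∧ t + 1 ≠ 0 ∧ t + 2 ≠ 0 ∧
        x = 6 / t ∧ y = 6 / (t + 1) ∧ z = 6 / (t + 2)) := by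
  constructor
  · intro t ht ht1 ht2
    refine ⟨?_, ?_, ?_⟩
    · have h3 : 6 / t * (6 / (t + 2)) + 3 * (6 / (t + 2)) - 3 * (6 / t) + 36 = 36 := by
        field_simp; ring
      have e1 : (6 / (t + 1)) ^ 2 * (6 / (t + 2) - 6) * (6 / t + 6)
          = -1296 / (t * (t + 2)) := by
        field_simp; ring
      have e2 : 6 / (t + 1) * (6 / t + 6 / (t + 2)) * 36 = 2592 / (t * (t + 2)) := by
        field_simp; ring
      have e3 : 3 * (6 / t) * (6 / (t + 2)) *
            (4 * (6 / t) - 4 * (6 / (t + 2)) - 6 / t * (6 / (t + 2)))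
          = 1296 / (t * (t + 2)) ^ 2 := by
        field_simp; ring
      have e4 : 9 * (6 / t + 6 / (t + 2)) ^ 2 = 1296 * (t + 1) ^ 2 / (t * (t + 2)) ^ 2 := by
        field_simp; ring
      rw [Fpoly, h3, e1, e2, e3, e4]
      field_simp
      ring
    · field_simp; ring
    · field_simp; ring
  · intro x y z hxz hs h1 h2
    have hx : x ≠ 0 := by
      rintro rfl
      have hyz : y * z = 0 := by linear_combination -h2
      rcases mul_eq_zero.mp hyz with hy | hz0
      · subst hy
        have hz0 : z = 0 := by linear_combination h1 / 6
        exact hxz hz0.symm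
      · exact hxz hz0.symm
    have hz : z ≠ 0 := by
      rintro rfl
      have hyx : y * x = 0 := by linear_combination -h2
      rcases mul_eq_zero.mp hyx with hy | hx0
      · subst hy
        have : x = 0 := by linear_combination h1 / 6
        exact hx this
      · exact hx hx0
    have hd : z - x ≠ 0 := sub_ne_zero.mpr (Ne.symm hxz)
    have key : (z - x) * (x * z - 3 * (x - z)) = 0 := by
      linear_combination ((x + z) / 2) * h1 + (x + 2 * z - 6) * h2
    have hp : x * z - 3 * (x - z) = 0 := (mul_eq_zero.mp key).resolve_left hd
    have hx6 : x + 6 ≠ 0 := by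
      intro h
      have hz6 : z = 6 := by linear_combination (-1/3 : K) * hp + (z / 3 - 1) * h
      exact hs (by rw [hz6]; linear_combination h)
    have hx3 : x + 3 ≠ 0 := by
      intro h
      have h9 : (9 : K) = 0 := by linear_combination hp + (3 - z) * h
      norm_num at h9
    have hy6 : y * (x + 6) = 6 * x := by
      have h0 : (x + z) * (y * (x + 6) - 6 * x) = 0 := by
        linear_combination (-(x + 6)) * h2 + 2 * x * hp
      have h0' := (mul_eq_zero.mp h0).resolve_left hs
      linear_combination h0'
    have hzz : z * (2 * x + 6) = 6 * x := by linear_combination 2 * hp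
    have h6x : (6 : K) + x ≠ 0 := fun h => hx6 (by linear_combination h)
    have h62x : (6 : K) + 2 * x ≠ 0 := fun h => hx3 (by linear_combination h / 2)
    have ht1' : 6 / x + 1 = (6 + x) / x := by field_simp
    have ht2' : 6 / x + 2 = (6 + 2 * x) / x := by field_simp
    refine ⟨6 / x, div_ne_zero (by norm_num) hx, ?_, ?_, ?_, ?_, ?_⟩
    · rw [ht1']
      exact div_ne_zero h6x hx
    · rw [ht2']
      exact div_ne_zero h62x hx
    · field_simp
    · rw [ht1', div_div_eq_mul_div, eq_div_iff h6x]
      linear_combination hy6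
    · rw [ht2', div_div_eq_mul_div, eq_div_iff h62x]
      linear_combination hzz
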